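/- Offseted argument. Let n ≥ 1, let Θ ∈ ℂ^{n×n} be symmetric with positive definite real part, and let ν ∈ ℕⁿ. Then for all r, s ∈ ℂⁿ: HG_Θ^ν(r + s) = 2^{−|ν|/2} · (πⁿ·det Θ)^{1/4} · e^{(1/2)·(r−s)ᵀΘ⁻¹(r−s)} · Σ_{μ ∈ ℕⁿ, μ ⪯ ν} √(C(ν,μ)) · HG_Θ^{ν−μ}(√2·r) · HG_Θ^μ(√2·s), where μ ⪯ ν means μ_j ≤ ν_j for all j, and C(ν,μ) = Π_j binom(ν_j, μ_j) is the multi-index binomial coefficient. -/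

import Mathlib

open scoped BigOperators
open MeasureTheory Matrix

noncomputable section

namespace AHGPaper

/-- Complex partial derivative in coordinate `j`. -/
def cpderiv {n : ℕ} (j : Fin n) (f : (Fin n → ℂ) → ℂ) : (Fin n → ℂ) → ℂ :=
  fun x => deriv (fun t : ℂ => f (Function.update x j t)) (x j)

/-- Mixed partial derivative of multi-order `ν`. -/
def mpderiv {n : ℕ} (ν : Fin n → ℕ) (f : (Fin n → ℂ) → ℂ) : (Fin n → ℂ) → ℂ :=
  (List.finRange n).foldr (fun j g => (cpderiv j)^[ν j] g) f

/-- The anisotropic Hermite-Gauss (AHG) function `HG_Θ^ν`. -/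
def HG {n : ℕ} (Θ : Matrix (Fin n) (Fin n) ℂ) (ν : Fin n → ℕ) (r : Fin n → ℂ) : ℂ :=
  (-(1 / (Real.sqrt 2 : ℂ))) ^ (∑ j, ν j) *
    ((∏ j, ((ν j).factorial : ℂ)) ^ (-(1 / 2 : ℂ))) *
    (((Real.pi : ℂ) ^ n * Θ.det) ^ (-(1 / 4 : ℂ))) *
    Complex.exp ((1 / 2 : ℂ) * (r ⬝ᵥ Θ⁻¹.mulVec r)) *
    mpderiv ν (fun x => Complex.exp (-(x ⬝ᵥ Θ⁻¹.mulVec x))) r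

/-- The dual anisotropic Hermite-Gauss function `H̃G_Θ^ν`. -/
def HGd {n : ℕ} (Θ : Matrix (Fin n) (Fin n) ℂ) (ν : Fin n → ℕ) (r : Fin n → ℂ) : ℂ :=
  (-(1 / (Real.sqrt 2 : ℂ))) ^ (∑ j, ν j) *
    ((∏ j, ((ν j).factorial : ℂ)) ^ (-(1 / 2 : ℂ))) *
    (((Real.pi : ℂ) ^ n * Θ.det) ^ (-(1 / 4 : ℂ))) *
    Complex.exp ((1 / 2 : ℂ) * ((Θ⁻¹.mulVec r) ⬝ᵥ Θ.mulVec (Θ⁻¹.mulVec r))) *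
    mpderiv ν (fun x => Complex.exp (-(x ⬝ᵥ Θ.mulVec x))) (Θ⁻¹.mulVec r)

/-- Physicists' Hermite polynomial via Rodrigues' formula. -/
def hermiteH (k : ℕ) (z : ℂ) : ℂ :=
  (-1) ^ k * Complex.exp (z ^ 2) * iteratedDeriv k (fun w => Complex.exp (-(w ^ 2))) z

/-- The `k`-th univariate Hermite-Gauss function `ψ_k`. -/
def psi (k : ℕ) (z : ℂ) : ℂ :=
  ((Real.sqrt Real.pi * 2 ^ k * k.factorial : ℝ) : ℂ) ^ (-(1 / 2 : ℂ)) *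
    Complex.exp (-(z ^ 2) / 2) * hermiteH k z

/-- The vector `φ_ν(r)` whose `k`-th entry is `(1/√2)·√(ν_k)·HG_Θ^{ν-ε_k}(r)`. -/
def phiV {n : ℕ} (Θ : Matrix (Fin n) (Fin n) ℂ) (ν : Fin n → ℕ) (r : Fin n → ℂ) :
    Fin n → ℂ :=
  fun k => (1 / (Real.sqrt 2 : ℂ)) * (Real.sqrt (ν k) : ℂ) *
    HG Θ (fun j => ν j - if j = k then 1 else 0) r

/-- The matrix `Φ_ν(r)`. -/
def PhiM {n : ℕ} (Θ : Matrix (Fin n) (Fin n) ℂ) (ν : Fin n → ℕ) (r : Fin n → ℂ) :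
    Matrix (Fin n) (Fin n) ℂ :=
  Matrix.of fun j k =>
    if j = k then
      (Real.sqrt (ν j * (ν j - 1)) : ℂ) * HG Θ (fun l => ν l - if l = j then 2 else 0) r
    else
      (Real.sqrt (ν j * ν k) : ℂ) *
        HG Θ (fun l => ν l - ((if l = j then 1 else 0) + (if l = k then 1 else 0))) r

/-- The `n`-dimensional linear canonical transform with parameter matrix `[[a,b],[c,d]]`. -/
def LCT {n : ℕ} (a b d : ℂ) (f : (Fin n → ℝ) → ℂ) (ζ : Fin n → ℝ) : ℂ :=
  (1 / (2 * (Real.pi : ℂ) * Complex.I * b)) ^ ((n : ℂ) / 2) *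
    Complex.exp (Complex.I * d / (2 * b) * ((fun i => (ζ i : ℂ)) ⬝ᵥ fun i => (ζ i : ℂ))) *
    ∫ r : Fin n → ℝ, f r *
      Complex.exp (-(Complex.I / (2 * b)) *
        ((fun i => (r i : ℂ)) ⬝ᵥ fun i => 2 * (ζ i : ℂ) - a * (r i : ℂ)))

/-- The `n`-dimensional Fourier transform `(2π)^{-n/2} ∫ f(r) e^{-i ζ·r} dr`. -/
def FT {n : ℕ} (f : (Fin n → ℝ) → ℂ) (ζ : Fin n → ℝ) : ℂ :=
  ((2 * Real.pi : ℝ) : ℂ) ^ (-(n : ℂ) / 2) *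
    ∫ r : Fin n → ℝ,
      f r * Complex.exp (-Complex.I * ((fun i => (ζ i : ℂ)) ⬝ᵥ fun i => (r i : ℂ)))

/-- The Wigner-Ville distribution. -/
def WVD {n : ℕ} (f : (Fin n → ℝ) → ℂ) (r ζ : Fin n → ℝ) : ℂ :=
  ((2 * Real.pi : ℝ) : ℂ) ^ (-(n : ℂ) / 2) *
    ∫ ξ : Fin n → ℝ,
      f (fun i => r i - ξ i / 2) * (starRingEnd ℂ) (f (fun i => r i + ξ i / 2)) *
        Complex.exp (-Complex.I * ((fun i => (ζ i : ℂ)) ⬝ᵥ fun i => (ξ i : ℂ)))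

end AHGPaper

/-!
Write `q(x) = xᵀ Θ⁻¹ x`. Since `e^{q} ∂_j (p e^{-q}) = ∂_j p - p ∂_j q`, one has
`∂^ν e^{-q} = P_ν e^{-q}` for the polynomials `P_ν` obtained from `1` by iterating these
(commuting) operators. As `∂_j q` is linear, the `P_ν` satisfy the addition formula
`c^|ν| P_ν(x + y) = ∑_{μ ≤ ν} C(ν, μ) P_{ν-μ}(c x) P_μ(c y)` for `c = √2`: by induction on `ν`,
differentiating the formula for `ν` along `(e_j, e_j)` and using Pascal's rule for multi-indices.
The Gaussian factors then match by the parallelogram law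
`q(√2 r) + q(√2 s) = q(r + s) + q(r - s)`, and the normalising constants by
`C(ν, μ) (ν - μ)! μ! = ν!`.
-/

open Finset MvPolynomial

namespace MultiIndex

variable {ι : Type*} [Fintype ι] [DecidableEq ι]

theorem induction_add_single {p : (ι → ℕ) → Prop} (zero : p 0)
    (step : ∀ ν j, p ν → p (ν + Pi.single j 1)) (ν : ι → ℕ) : p ν := by
  have add_single : ∀ μ i m, p μ → p (μ + Pi.single i m) := by
    intro μ i m hμ
    induction m with
    | zero => simpa using hμ
    | succ m ih => simpa [← add_assoc, Pi.single_add] using step _ i ih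
  rw [← univ_sum_single ν]
  induction (univ : Finset ι) using Finset.induction_on with
  | empty => simpa using zero
  | insert i s hi ih => rw [sum_insert hi, add_comm]; exact add_single _ i _ ih

theorem prod_choose_add_single (ν μ : ι → ℕ) (j : ι) :
    ∏ i, ((ν + Pi.single j 1 : ι → ℕ) i).choose (μ i) =
      ∏ i, (ν i).choose (μ i) +
        if 0 < μ j then ∏ i, (ν i).choose ((μ - Pi.single j 1 : ι → ℕ) i) else 0 := by
  have off_j : ∀ i ∈ ({j}ᶜ : Finset ι), (ν + Pi.single j 1 : ι → ℕ) i = ν i ∧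
      (μ - Pi.single j 1 : ι → ℕ) i = μ i := fun i hi => by
    simp [show i ≠ j by simpa using hi]
  simp only [Fintype.prod_eq_mul_prod_compl j,
    prod_congr rfl fun i hi => congrArg₂ Nat.choose (off_j i hi).1 rfl,
    prod_congr rfl fun i hi => congrArg (Nat.choose (ν i)) (off_j i hi).2]
  rcases Nat.eq_zero_or_pos (μ j) with h | h
  · simp [h]
  · obtain ⟨m, hm⟩ := Nat.exists_eq_add_of_lt h
    simp [hm, Nat.choose_succ_succ']
    ring

variable {R : Type*} [CommSemiring R]

def binomConv (ν : ι → ℕ) (f : (ι → ℕ) → (ι → ℕ) → R) : R :=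
  ∑ μ ∈ Iic ν, ((∏ i, (ν i).choose (μ i) : ℕ) : R) * f (ν - μ) μ

theorem sum_Iic_choose_mul_of_le {ν ν' : ι → ℕ} (h : ν ≤ ν') (g : (ι → ℕ) → R) :
    ∑ μ ∈ Iic ν', ((∏ i, (ν i).choose (μ i) : ℕ) : R) * g μ =
      ∑ μ ∈ Iic ν, ((∏ i, (ν i).choose (μ i) : ℕ) : R) * g μ := by
  refine (sum_subset (Iic_subset_Iic.2 h) fun μ _ hμ => ?_).symm
  obtain ⟨i, hi⟩ : ∃ i, ν i < μ i := by simpa [Pi.le_def] using hμ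
  rw [prod_eq_zero (f := fun i => (ν i).choose (μ i)) (mem_univ i)
    (Nat.choose_eq_zero_of_lt hi)]
  simp

theorem binomConv_add_single (ν : ι → ℕ) (j : ι) (f : (ι → ℕ) → (ι → ℕ) → R) :
    binomConv (ν + Pi.single j 1) f =
      binomConv ν (fun α β => f (α + Pi.single j 1) β + f α (β + Pi.single j 1)) := by
  have hle : ν ≤ ν + Pi.single j 1 := fun i => Nat.le_add_right _ _
  simp only [binomConv, prod_choose_add_single, Nat.cast_add, add_mul, sum_add_distrib, mul_add]
  congr 1
  · rw [sum_Iic_choose_mul_of_le hle]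
    refine sum_congr rfl fun μ hμ => ?_
    rw [tsub_add_eq_add_tsub (mem_Iic.1 hμ)]
  · have hmap : (Iic ν).map (addRightEmbedding (Pi.single j 1)) =
        (Iic (ν + Pi.single j 1)).filter (fun μ => 0 < μ j) := by
      ext μ
      simp only [mem_map, mem_Iic, addRightEmbedding_apply, mem_filter]
      constructor
      · rintro ⟨α, hα, rfl⟩
        exact ⟨by gcongr, by simp⟩
      · rintro ⟨hμ, hj⟩
        have hsingle : (Pi.single j 1 : ι → ℕ) ≤ μ := fun i => by
          rcases eq_or_ne i j with rfl | hi
          · simpa [Nat.one_le_iff_ne_zero] using hj.ne'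
          · simp [hi]
        exact ⟨μ - Pi.single j 1, tsub_le_iff_right.2 hμ, tsub_add_cancel_of_le hsingle⟩
    simp only [Nat.cast_ite, Nat.cast_zero, ite_mul, zero_mul]
    rw [← sum_filter, ← hmap, sum_map]
    refine sum_congr rfl fun μ _ => ?_
    simp [add_tsub_add_eq_tsub_right]

@[simp]
theorem binomConv_zero (f : (ι → ℕ) → (ι → ℕ) → R) : binomConv 0 f = f 0 0 := by
  have hIic : Iic (0 : ι → ℕ) = {0} := by
    ext μ
    simp [funext_iff]
  simp [binomConv, hIic]

theorem hasDerivAt_binomConv {𝕜 : Type*} [NontriviallyNormedField 𝕜] (ν : ι → ℕ)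
    {f : 𝕜 → (ι → ℕ) → (ι → ℕ) → 𝕜} {f' : (ι → ℕ) → (ι → ℕ) → 𝕜} {t : 𝕜}
    (h : ∀ α β, HasDerivAt (fun s => f s α β) (f' α β) t) :
    HasDerivAt (fun s => binomConv ν (f s)) (binomConv ν f') t :=
  HasDerivAt.fun_sum fun _ _ => (h _ _).const_mul _

end MultiIndex

theorem List.foldr_iterate_add_single {ι α : Type*} [DecidableEq ι] {f : ι → α → α}
    (hf : ∀ i j, Function.Commute (f i) (f j)) {l : List ι} (hl : l.Nodup) {j : ι} (hj : j ∈ l)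
    (ν : ι → ℕ) (x : α) :
    l.foldr (fun i y => (f i)^[(ν + Pi.single j 1 : ι → ℕ) i] y) x =
      f j (l.foldr (fun i y => (f i)^[ν i] y) x) := by
  induction l with
  | nil => simp at hj
  | cons i l ih =>
    obtain ⟨hil, hl⟩ := List.nodup_cons.1 hl
    simp only [List.foldr_cons]
    rcases eq_or_ne i j with rfl | hij
    · have htail : l.foldr (fun k y => (f k)^[(ν + Pi.single i 1 : ι → ℕ) k] y) x =
          l.foldr (fun k y => (f k)^[ν k] y) x :=
        List.foldr_ext _ _ _ fun k hk _ => by simp [show k ≠ i by rintro rfl; exact hil hk]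
      simp only [htail]
      simp [Function.iterate_succ_apply']
    · rw [ih hl (by simpa [hij.symm] using hj)]
      simpa [hij] using ((hf j i).iterate_right (ν i) _).symm

namespace MvPolynomial

variable {σ R : Type*} [CommRing R]

theorem pderiv_pderiv_comm (i j : σ) (p : MvPolynomial σ R) :
    pderiv i (pderiv j p) = pderiv j (pderiv i p) := by
  classical
  induction p using MvPolynomial.induction_on with
  | C a => simp
  | add p q hp hq => simp [hp, hq]
  | mul_X p k hp =>
    simp only [pderiv_mul, pderiv_X, map_add, hp, Pi.single_apply]
    split_ifs <;> simp; ring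

theorem hasDerivAt_eval_update {𝕜 : Type*} [NontriviallyNormedField 𝕜] [DecidableEq σ]
    (p : MvPolynomial σ 𝕜) (z : σ → 𝕜) (j : σ) (t : 𝕜) :
    HasDerivAt (fun s => eval (Function.update z j s) p)
      (eval (Function.update z j t) (pderiv j p)) t := by
  induction p using MvPolynomial.induction_on with
  | C a => simpa using hasDerivAt_const t a
  | add p q hp hq => simpa using hp.fun_add hq
  | mul_X p k hp =>
    rcases eq_or_ne k j with rfl | hk
    · simpa [pderiv_mul, mul_comm, add_comm] using hp.fun_mul (hasDerivAt_id t)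
    · simpa [pderiv_mul, pderiv_X_of_ne hk, Function.update_of_ne hk, mul_comm]
        using hp.mul_const (z k)

theorem hasDerivAt_eval_add_smul_single {𝕜 : Type*} [NontriviallyNormedField 𝕜]
    [DecidableEq σ] (p : MvPolynomial σ 𝕜) (z : σ → 𝕜) (j : σ) (a : 𝕜) :
    HasDerivAt (fun t => eval (z + (a * t) • Pi.single j 1) p) (a * eval z (pderiv j p)) 0 := by
  have hline : ∀ t, z + (a * t) • Pi.single j 1 = Function.update z j (z j + a * t) := by
    intro t
    ext i
    rcases eq_or_ne i j with rfl | hi <;> simp [Function.update_of_ne, *]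
  have h := (hasDerivAt_eval_update p z j (z j + a * 0)).comp (0 : 𝕜)
    (((hasDerivAt_id (0 : 𝕜)).const_mul a).const_add (z j))
  rw [mul_zero, add_zero, Function.update_eq_self, mul_one] at h
  simp only [hline]
  rw [mul_comm]
  exact h

def twistedPDeriv (q : MvPolynomial σ R) (j : σ) (p : MvPolynomial σ R) : MvPolynomial σ R :=
  pderiv j p - p * pderiv j q

theorem twistedPDeriv_commute (q : MvPolynomial σ R) (i j : σ) :
    Function.Commute (twistedPDeriv q i) (twistedPDeriv q j) := fun p => by
  simp only [twistedPDeriv, map_sub, pderiv_mul, pderiv_pderiv_comm i j]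
  ring

def hermitePoly {n : ℕ} (q : MvPolynomial (Fin n) R) (ν : Fin n → ℕ) :
    MvPolynomial (Fin n) R :=
  (List.finRange n).foldr (fun j p => (twistedPDeriv q j)^[ν j] p) 1

theorem hermitePoly_zero {n : ℕ} (q : MvPolynomial (Fin n) R) : hermitePoly q 0 = 1 := by
  simp [hermitePoly]

theorem hermitePoly_add_single {n : ℕ} (q : MvPolynomial (Fin n) R) (ν : Fin n → ℕ)
    (j : Fin n) : hermitePoly q (ν + Pi.single j 1) = twistedPDeriv q j (hermitePoly q ν) :=
  List.foldr_iterate_add_single (twistedPDeriv_commute q) (List.nodup_finRange n)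
    (List.mem_finRange j) ν 1

variable [Fintype σ]

def quadForm (A : Matrix σ σ R) : MvPolynomial σ R :=
  ∑ i, ∑ k, C (A i k) * X i * X k

theorem eval_quadForm (A : Matrix σ σ R) (z : σ → R) :
    eval z (quadForm A) = z ⬝ᵥ A *ᵥ z := by
  simp only [quadForm, map_sum, map_mul, eval_C, eval_X, dotProduct, mulVec, mul_sum]
  exact sum_congr rfl fun i _ => sum_congr rfl fun k _ => by ring

theorem eval_pderiv_quadForm (A : Matrix σ σ R) (j : σ) (z : σ → R) :
    eval z (pderiv j (quadForm A)) = ((A + Aᵀ) *ᵥ z) j := by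
  classical
  simp [quadForm, pderiv_X, mulVec, dotProduct, Pi.single_apply, add_mul, sum_add_distrib,
    mul_comm (z _), add_comm]

open MultiIndex in
theorem two_mul_eval_pderiv_of_eval_add_eq_binomConv {𝕜 ι : Type*}
    [NontriviallyNormedField 𝕜] [Fintype ι] [DecidableEq ι] {p : MvPolynomial ι 𝕜}
    {P : (ι → ℕ) → MvPolynomial ι 𝕜} {a c : 𝕜} {ν : ι → ℕ}
    (h : ∀ x y, a * eval (x + y) p =
      binomConv ν fun α β => eval (c • x) (P α) * eval (c • y) (P β))
    (j : ι) (x y : ι → 𝕜) :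
    a * (2 * eval (x + y) (pderiv j p)) =
      binomConv ν fun α β => c * eval (c • x) (pderiv j (P α)) * eval (c • y) (P β) +
        eval (c • x) (P α) * (c * eval (c • y) (pderiv j (P β))) := by
  set e : ι → 𝕜 := Pi.single j 1
  have hshift : ∀ t : 𝕜, a * eval (x + y + (2 * t) • e) p =
      binomConv ν fun α β =>
        eval (c • x + (c * t) • e) (P α) * eval (c • y + (c * t) • e) (P β) := by
    intro t
    convert h (x + t • e) (y + t • e) using 4
    · module
    · simp only [smul_add, smul_smul]
  refine HasDerivAt.unique ((hasDerivAt_eval_add_smul_single p (x + y) j 2).const_mul a) ?_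
  rw [_root_.funext hshift]
  exact hasDerivAt_binomConv ν fun α β => by
    simpa using (hasDerivAt_eval_add_smul_single (P α) (c • x) j c).fun_mul
      (hasDerivAt_eval_add_smul_single (P β) (c • y) j c)

open MultiIndex in
theorem hermitePoly_quadForm_add {𝕜 : Type*} [NontriviallyNormedField 𝕜] [CharZero 𝕜] {n : ℕ}
    (A : Matrix (Fin n) (Fin n) 𝕜) {c : 𝕜} (hc : c ^ 2 = 2) (ν : Fin n → ℕ)
    (x y : Fin n → 𝕜) :
    c ^ (∑ j, ν j) * eval (x + y) (hermitePoly (quadForm A) ν) =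
      binomConv ν fun α β =>
        eval (c • x) (hermitePoly (quadForm A) α) * eval (c • y) (hermitePoly (quadForm A) β) := by
  set q := quadForm A
  induction ν using MultiIndex.induction_add_single generalizing x y with
  | zero => simp [hermitePoly_zero]
  | step ν j ih =>
    set F := binomConv ν fun α β =>
      eval (c • x) (hermitePoly q α) * eval (c • y) (hermitePoly q β)
    have hc0 : c ≠ 0 := by rintro rfl; norm_num at hc
    -- The derivative terms of `P_{ν+e_j} = ∂_j P_ν - P_ν ∂_j q` come from differentiating `ih`,
    -- the multiplication terms from `ih` itself, since `∂_j q` is linear.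
    have hderiv := two_mul_eval_pderiv_of_eval_add_eq_binomConv ih j x y
    have hlin : eval (c • x) (pderiv j q) + eval (c • y) (pderiv j q) =
        c * eval (x + y) (pderiv j q) := by
      simp only [q, eval_pderiv_quadForm, mulVec_add, mulVec_smul, Pi.add_apply, Pi.smul_apply,
        smul_eq_mul]
      ring
    have hsplit : c * (binomConv ν fun α β =>
          eval (c • x) (hermitePoly q (α + Pi.single j 1)) * eval (c • y) (hermitePoly q β) +
            eval (c • x) (hermitePoly q α) * eval (c • y) (hermitePoly q (β + Pi.single j 1))) =
        (binomConv ν fun α β =>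
          c * eval (c • x) (pderiv j (hermitePoly q α)) * eval (c • y) (hermitePoly q β) +
            eval (c • x) (hermitePoly q α) * (c * eval (c • y) (pderiv j (hermitePoly q β)))) -
          c * (eval (c • x) (pderiv j q) + eval (c • y) (pderiv j q)) * F := by
      simp only [F, binomConv, mul_sum, ← sum_sub_distrib]
      refine sum_congr rfl fun μ _ => ?_
      simp only [hermitePoly_add_single, twistedPDeriv, map_sub, map_mul]
      ring
    have hsum : ∑ i, (ν + Pi.single j 1 : Fin n → ℕ) i = ∑ i, ν i + 1 := by
      simp [sum_add_distrib]
    rw [binomConv_add_single, hermitePoly_add_single, twistedPDeriv, hsum]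
    apply mul_left_cancel₀ hc0
    simp only [map_sub, map_mul]
    linear_combination (-1 : 𝕜) * hsplit + hderiv
      + (c ^ (∑ i, ν i) * eval (x + y) (pderiv j (hermitePoly q ν))) * hc
      - (c ^ 2 * eval (x + y) (pderiv j q)) * ih x y + (c * F) * hlin

end MvPolynomial

theorem Complex.natCast_cpow_neg_half (m : ℕ) :
    (m : ℂ) ^ (-(1 / 2) : ℂ) = ((Real.sqrt m)⁻¹ : ℝ) := by
  rw [Real.sqrt_eq_rpow, ← Real.rpow_neg (Nat.cast_nonneg m),
    Complex.ofReal_cpow (Nat.cast_nonneg m)]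
  norm_num

theorem Complex.two_cpow_neg_div_two_mul_sqrt_two_pow (N : ℕ) :
    (2 : ℂ) ^ (-(N : ℂ) / 2) * (Real.sqrt 2 : ℂ) ^ N = 1 := by
  have h2 : (2 : ℂ) ^ (-(1 / 2) : ℂ) = ((Real.sqrt 2)⁻¹ : ℝ) := by
    exact_mod_cast natCast_cpow_neg_half 2
  rw [show -(N : ℂ) / 2 = N * (-(1 / 2)) by ring, cpow_nat_mul, h2, ← mul_pow, ← ofReal_mul,
    inv_mul_cancel₀ (by positivity), ofReal_one, one_pow]

theorem Matrix.parallelogram_dotProduct_mulVec {ι R : Type*} [Fintype ι] [CommRing R]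
    (A : Matrix ι ι R) (x y : ι → R) :
    (x + y) ⬝ᵥ A *ᵥ (x + y) + (x - y) ⬝ᵥ A *ᵥ (x - y) =
      2 * (x ⬝ᵥ A *ᵥ x) + 2 * (y ⬝ᵥ A *ᵥ y) := by
  simp only [mulVec_add, mulVec_sub, add_dotProduct, dotProduct_add, sub_dotProduct,
    dotProduct_sub]
  ring

theorem Matrix.cexp_half_parallelogram {ι : Type*} [Fintype ι] (A : Matrix ι ι ℂ) {c : ℂ}
    (hc : c ^ 2 = 2) (r s : ι → ℂ) :
    Complex.exp ((1 / 2) * ((r - s) ⬝ᵥ A *ᵥ (r - s))) *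
        (Complex.exp (-(1 / 2) * (c • r ⬝ᵥ A *ᵥ c • r)) *
          Complex.exp (-(1 / 2) * (c • s ⬝ᵥ A *ᵥ c • s))) =
      Complex.exp (-(1 / 2) * ((r + s) ⬝ᵥ A *ᵥ (r + s))) := by
  rw [← Complex.exp_add, ← Complex.exp_add]
  congr 1
  simp only [mulVec_smul, dotProduct_smul, smul_dotProduct, smul_eq_mul]
  linear_combination (1 / 2 : ℂ) * parallelogram_dotProduct_mulVec A r s
    - (1 / 2 : ℂ) * ((r ⬝ᵥ A *ᵥ r) + (s ⬝ᵥ A *ᵥ s)) * hc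

theorem finsum_forall_le_eq_sum_Iic {ι M : Type*} [Fintype ι] [DecidableEq ι]
    [AddCommMonoid M] (ν : ι → ℕ) (f : (ι → ℕ) → M) :
    ∑ᶠ (μ : ι → ℕ) (_ : ∀ j, μ j ≤ ν j), f μ = ∑ μ ∈ Iic ν, f μ := by
  rw [← finsum_mem_coe_finset, coe_Iic]
  rfl

namespace AHGPaper

variable {n : ℕ}

theorem cpderiv_semiconj_twistedPDeriv (q : MvPolynomial (Fin n) ℂ) (j : Fin n) :
    Function.Semiconj (fun p x => eval x p * Complex.exp (-eval x q)) (twistedPDeriv q j)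
      (cpderiv j) := fun p => by
  funext x
  have h := (hasDerivAt_eval_update p x j (x j)).fun_mul
    (hasDerivAt_eval_update q x j (x j)).fun_neg.cexp
  rw [Function.update_eq_self] at h
  rw [cpderiv, h.deriv, twistedPDeriv]
  simp only [map_sub, map_mul]
  ring

theorem mpderiv_exp_neg_eval (q : MvPolynomial (Fin n) ℂ) (ν : Fin n → ℕ) :
    mpderiv ν (fun x => Complex.exp (-eval x q)) =
      fun x => eval x (hermitePoly q ν) * Complex.exp (-eval x q) := by
  have hfold : ∀ (l : List (Fin n)) (p : MvPolynomial (Fin n) ℂ),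
      l.foldr (fun j g => (cpderiv j)^[ν j] g) (fun x => eval x p * Complex.exp (-eval x q)) =
        fun x => eval x (l.foldr (fun j p => (twistedPDeriv q j)^[ν j] p) p) *
          Complex.exp (-eval x q) := by
    intro l p
    induction l with
    | nil => rfl
    | cons i l ih =>
      simp only [List.foldr_cons, ih, (cpderiv_semiconj_twistedPDeriv q i).iterate_right _ _]
  simpa [mpderiv, hermitePoly] using hfold (List.finRange n) 1

def hgCoeff {ι : Type*} [Fintype ι] (ν : ι → ℕ) : ℂ :=
  (-(1 / (Real.sqrt 2 : ℂ))) ^ (∑ j, ν j) * (∏ j, ((ν j).factorial : ℂ)) ^ (-(1 / 2 : ℂ))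

theorem sqrt_choose_mul_hgCoeff {ι : Type*} [Fintype ι] {ν μ : ι → ℕ} (h : μ ≤ ν) :
    (Real.sqrt ((∏ j, (ν j).choose (μ j) : ℕ) : ℝ) : ℂ) * hgCoeff (ν - μ) * hgCoeff μ =
      ((∏ j, (ν j).choose (μ j) : ℕ) : ℂ) * hgCoeff ν := by
  have hsum : ∑ j, (ν - μ) j + ∑ j, μ j = ∑ j, ν j := by
    rw [← sum_add_distrib]
    exact sum_congr rfl fun j _ => tsub_add_cancel_of_le (h j)
  have hfact : (∏ j, (ν j).choose (μ j)) * (∏ j, ((ν - μ) j).factorial) *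
      ∏ j, (μ j).factorial = ∏ j, (ν j).factorial := by
    rw [← prod_mul_distrib, ← prod_mul_distrib]
    exact prod_congr rfl fun j _ => by
      rw [Pi.sub_apply, mul_right_comm]
      exact Nat.choose_mul_factorial_mul_factorial (h j)
  simp only [hgCoeff, ← Nat.cast_prod, Complex.natCast_cpow_neg_half, ← hfact]
  set C := ∏ j, (ν j).choose (μ j)
  have hC : (C : ℂ) = (Real.sqrt C : ℂ) * (Real.sqrt C : ℂ) := by
    exact_mod_cast (Real.mul_self_sqrt (Nat.cast_nonneg C)).symm
  have hC0 : (Real.sqrt C : ℂ) * (Real.sqrt C : ℂ)⁻¹ = 1 :=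
    mul_inv_cancel₀ (Complex.ofReal_ne_zero.2 (Real.sqrt_ne_zero'.2
      (Nat.cast_pos.2 (prod_pos fun j _ => Nat.choose_pos (h j)))))
  rw [Nat.cast_mul, Nat.cast_mul, Real.sqrt_mul (by positivity), Real.sqrt_mul (by positivity),
    ← hsum, pow_add, hC]
  simp only [Complex.ofReal_mul, Complex.ofReal_inv, mul_inv]
  linear_combination (-(Real.sqrt C : ℂ) * (-(1 / (Real.sqrt 2 : ℂ))) ^ (∑ j, (ν - μ) j) *
    (-(1 / (Real.sqrt 2 : ℂ))) ^ (∑ j, μ j) *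
    (Real.sqrt (∏ j, ((ν - μ) j).factorial : ℕ) : ℂ)⁻¹ *
    (Real.sqrt (∏ j, (μ j).factorial : ℕ) : ℂ)⁻¹) * hC0

theorem HG_eq_hgCoeff_mul (Θ : Matrix (Fin n) (Fin n) ℂ) (ν : Fin n → ℕ) (r : Fin n → ℂ) :
    HG Θ ν r = hgCoeff ν * ((Real.pi : ℂ) ^ n * Θ.det) ^ (-(1 / 4 : ℂ)) *
      eval r (hermitePoly (quadForm Θ⁻¹) ν) * Complex.exp (-(1 / 2) * (r ⬝ᵥ Θ⁻¹ *ᵥ r)) := by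
  simp_rw [HG, ← eval_quadForm, mpderiv_exp_neg_eval, hgCoeff]
  have hexp : Complex.exp ((1 / 2) * eval r (quadForm Θ⁻¹)) *
      Complex.exp (-eval r (quadForm Θ⁻¹)) = Complex.exp (-(1 / 2) * eval r (quadForm Θ⁻¹)) := by
    rw [← Complex.exp_add]
    ring_nf
  rw [← hexp]
  ring

theorem sum_sqrt_choose_mul_HG_mul_HG (Θ : Matrix (Fin n) (Fin n) ℂ) {c : ℂ} (hc : c ^ 2 = 2)
    (ν : Fin n → ℕ) (r s : Fin n → ℂ) :
    ∑ μ ∈ Iic ν, (Real.sqrt ((∏ j, (ν j).choose (μ j) : ℕ) : ℝ) : ℂ) *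
        HG Θ (ν - μ) (c • r) * HG Θ μ (c • s) =
      hgCoeff ν * ((Real.pi : ℂ) ^ n * Θ.det) ^ (-(1 / 4 : ℂ)) *
        ((Real.pi : ℂ) ^ n * Θ.det) ^ (-(1 / 4 : ℂ)) *
        Complex.exp (-(1 / 2) * (c • r ⬝ᵥ Θ⁻¹ *ᵥ c • r)) *
        Complex.exp (-(1 / 2) * (c • s ⬝ᵥ Θ⁻¹ *ᵥ c • s)) *
        (c ^ (∑ j, ν j) * eval (r + s) (hermitePoly (quadForm Θ⁻¹) ν)) := by
  rw [hermitePoly_quadForm_add _ hc, MultiIndex.binomConv, mul_sum]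
  refine sum_congr rfl fun μ hμ => ?_
  rw [HG_eq_hgCoeff_mul, HG_eq_hgCoeff_mul]
  linear_combination (((Real.pi : ℂ) ^ n * Θ.det) ^ (-(1 / 4 : ℂ)) *
      ((Real.pi : ℂ) ^ n * Θ.det) ^ (-(1 / 4 : ℂ)) *
      Complex.exp (-(1 / 2) * (c • r ⬝ᵥ Θ⁻¹ *ᵥ c • r)) *
      Complex.exp (-(1 / 2) * (c • s ⬝ᵥ Θ⁻¹ *ᵥ c • s)) *
      eval (c • r) (hermitePoly (quadForm Θ⁻¹) (ν - μ)) *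
      eval (c • s) (hermitePoly (quadForm Θ⁻¹) μ)) * sqrt_choose_mul_hgCoeff (mem_Iic.1 hμ)

end AHGPaper

open AHGPaper
theorem ahg_offset_general (n : ℕ) (Θ : Matrix (Fin n) (Fin n) ℂ)
    (ν : Fin n → ℕ) (r s : Fin n → ℂ) :
    HG Θ ν (r + s) =
      (2 : ℂ) ^ (-((∑ j, ν j : ℕ) : ℂ) / 2) *
        ((Real.pi : ℂ) ^ n * Θ.det) ^ (1 / 4 : ℂ) *
        Complex.exp ((1 / 2 : ℂ) * ((r - s) ⬝ᵥ Θ⁻¹.mulVec (r - s))) *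
        ∑ᶠ (μ : Fin n → ℕ) (_ : ∀ j, μ j ≤ ν j),
          (Real.sqrt ((∏ j, (ν j).choose (μ j) : ℕ) : ℝ) : ℂ) *
            HG Θ (fun j => ν j - μ j) (fun i => (Real.sqrt 2 : ℂ) * r i) *
            HG Θ μ (fun i => (Real.sqrt 2 : ℂ) * s i) := by
  set Z := (Real.pi : ℂ) ^ n * Θ.det with hZ_def
  set c : ℂ := (Real.sqrt 2 : ℂ)
  have hc : c ^ 2 = 2 := by
    rw [← Complex.ofReal_pow, Real.sq_sqrt zero_le_two, Complex.ofReal_ofNat]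
  -- For singular `Θ` both sides vanish, because `0 ^ (-1/4) = 0` in `HG`.
  by_cases hZ : Z = 0
  · simp [HG_eq_hgCoeff_mul, ← hZ_def, hZ]
  have hZ4 : Z ^ (1 / 4 : ℂ) = (Z ^ (-(1 / 4) : ℂ))⁻¹ := by
    rw [← Complex.cpow_neg, neg_neg]
  have h2 : (2 : ℂ) ^ (-((∑ j, ν j : ℕ) : ℂ) / 2) = (c ^ (∑ j, ν j))⁻¹ :=
    eq_inv_of_mul_eq_one_left (Complex.two_cpow_neg_div_two_mul_sqrt_two_pow _)
  have hc0 : c ≠ 0 := by rintro h; simp [h] at hc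
  have hZ0 : Z ^ (-(1 / 4) : ℂ) ≠ 0 := by simpa [Complex.cpow_eq_zero_iff] using hZ
  have hsmul (z : Fin n → ℂ) : (fun i => c * z i) = c • z := rfl
  simp only [← Pi.sub_def, hsmul]
  rw [finsum_forall_le_eq_sum_Iic, sum_sqrt_choose_mul_HG_mul_HG Θ hc, HG_eq_hgCoeff_mul,
    ← hZ_def, ← Θ⁻¹.cexp_half_parallelogram hc r s, hZ4, h2]
  field_simp

/-- AHG function with offseted argument. -/
theorem ahg_offset (n : ℕ) (hn : 1 ≤ n) (Θ : Matrix (Fin n) (Fin n) ℂ)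
    (hsym : Θ.IsSymm) (hpd : (Θ.map Complex.re).PosDef)
    (ν : Fin n → ℕ) (r s : Fin n → ℂ) :
    HG Θ ν (r + s) =
      (2 : ℂ) ^ (-((∑ j, ν j : ℕ) : ℂ) / 2) *
        ((Real.pi : ℂ) ^ n * Θ.det) ^ (1 / 4 : ℂ) *
        Complex.exp ((1 / 2 : ℂ) * ((r - s) ⬝ᵥ Θ⁻¹.mulVec (r - s))) *
        ∑ᶠ (μ : Fin n → ℕ) (_ : ∀ j, μ j ≤ ν j),
          (Real.sqrt ((∏ j, (ν j).choose (μ j) : ℕ) : ℝ) : ℂ) *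
            HG Θ (fun j => ν j - μ j) (fun i => (Real.sqrt 2 : ℂ) * r i) *
            HG Θ μ (fun i => (Real.sqrt 2 : ℂ) * s i) :=
  ahg_offset_general n Θ ν r s
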